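/- Dual of the min-max problem: the optimal value of min_{x^1 ∈ X_1, …, x^N ∈ X_N} max_{s ∈ {1,…,S}} ∑_{i=1}^N g_{is}(x^i_s) equals the optimal value of max { ∑_{i=1}^N q_i(μ) : μ ⪰ 0, 1ᵀ μ = 1 }, where q_i(μ) = min_{x ∈ X_i} ∑_s μ_s g_{is}(x_s). -/

import Mathlib

/-!
The function `L(x, μ) = ∑ₛ μₛ ∑ᵢ gᵢₛ(xⁱₛ)` is continuous, convex in `x` on the compact convex set
`∏ᵢ Xᵢ` and linear in `μ` on the simplex, so Sion's minimax theorem gives a saddle point `(a, b)`.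
Maximising `L(a, ·)` over the simplex yields the primal objective `maxₛ ∑ᵢ gᵢₛ(aⁱₛ)` (put all the
weight on a worst scenario), while minimising `L(·, b)` over `∏ᵢ Xᵢ` separates into `∑ᵢ qᵢ(b)`.
The saddle inequality bounds the former by the latter, and weak duality
`∑ᵢ qᵢ(μ) ≤ L(x, μ) ≤ maxₛ ∑ᵢ gᵢₛ(xⁱₛ)` gives the reverse inequality, so both values are attained
and equal.
-/

open Set Finset

theorem csInf_eq_csSup_of_le_of_forall_le {α : Type*} [ConditionallyCompleteLattice α]
    {A B : Set α} {a b : α} (ha : a ∈ A) (hb : b ∈ B) (hab : a ≤ b)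
    (hBA : ∀ x ∈ A, ∀ y ∈ B, y ≤ x) : sInf A = sSup B := by
  rw [IsLeast.csInf_eq ⟨ha, fun x hx => hab.trans (hBA x hx b hb)⟩,
    IsGreatest.csSup_eq ⟨hb, fun y hy => (hBA a ha y hy).trans hab⟩]
  exact le_antisymm hab (hBA a ha b hb)

theorem convexOn_sum {𝕜 E β ι : Type*} [Semiring 𝕜] [PartialOrder 𝕜] [AddCommMonoid E]
    [AddCommMonoid β] [PartialOrder β] [IsOrderedAddMonoid β] [SMul 𝕜 E] [Module 𝕜 β]
    {s : Set E} (hs : Convex 𝕜 s) (t : Finset ι) {f : ι → E → β}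
    (hf : ∀ i ∈ t, ConvexOn 𝕜 s (f i)) : ConvexOn 𝕜 s fun x => ∑ i ∈ t, f i x := by
  classical
  induction t using Finset.induction_on with
  | empty => simpa using convexOn_const 0 hs
  | insert a t ha ih =>
    simp_rw [Finset.sum_insert ha]
    exact (hf a (mem_insert_self a t)).add (ih fun i hi => hf i (mem_insert_of_mem hi))

section

variable {ι σ : Type*} [Fintype ι] [Fintype σ]

theorem sum_mul_le_ciSup_of_mem_stdSimplex {μ : σ → ℝ} (hμ : μ ∈ stdSimplex ℝ σ) (v : σ → ℝ) :
    ∑ s, μ s * v s ≤ ⨆ s, v s :=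
  calc ∑ s, μ s * v s ≤ ∑ s, μ s * ⨆ t, v t :=
        sum_le_sum fun s _ =>
          mul_le_mul_of_nonneg_left (le_ciSup (Finite.bddAbove_range v) s) (hμ.1 s)
    _ = ⨆ t, v t := by rw [← sum_mul, hμ.2, one_mul]

theorem exists_mem_stdSimplex_sum_mul_eq_ciSup [Nonempty σ] (v : σ → ℝ) :
    ∃ μ ∈ stdSimplex ℝ σ, ∑ s, μ s * v s = ⨆ s, v s := by
  classical
  obtain ⟨s, hs⟩ := exists_eq_ciSup_of_finite (f := v)
  exact ⟨Pi.single s 1, single_mem_stdSimplex ℝ s, by rw [← hs]; simp [Pi.single_apply]⟩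

theorem concaveOn_sum_mul (c : σ → ℝ) {K : Set (σ → ℝ)} (hK : Convex ℝ K) :
    ConcaveOn ℝ K fun μ : σ → ℝ => ∑ s, μ s * c s :=
  (Fintype.linearCombination ℝ c).concaveOn hK

variable {g : ι → σ → ℝ → ℝ}

theorem convexOn_sum_mul_sum (hg : ∀ i s, ConvexOn ℝ univ (g i s)) {μ : σ → ℝ}
    (hμ : ∀ s, 0 ≤ μ s) :
    ConvexOn ℝ univ fun x : ι → σ → ℝ => ∑ s, μ s * ∑ i, g i s (x i s) := by
  refine convexOn_sum convex_univ _ fun s _ =>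
    (convexOn_sum convex_univ _ fun i _ => ?_).smul (hμ s)
  exact (hg i s).comp_linearMap (LinearMap.proj (R := ℝ) (φ := fun _ : σ => ℝ) s ∘ₗ
    LinearMap.proj (φ := fun _ : ι => σ → ℝ) i)

theorem exists_isMinOn_sum_mul_sum {X : ι → Set (σ → ℝ)} (hne : ∀ i, (X i).Nonempty)
    (hcmp : ∀ i, IsCompact (X i)) (hgc : ∀ i s, Continuous (g i s)) (μ : σ → ℝ) :
    ∃ x ∈ univ.pi X,
      IsMinOn (fun x : ι → σ → ℝ => ∑ s, μ s * ∑ i, g i s (x i s)) (univ.pi X) x ∧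
      ∑ i, sInf {w | ∃ y ∈ X i, w = ∑ s, μ s * g i s (y s)} =
        ∑ s, μ s * ∑ i, g i s (x i s) := by
  have hsep (x : ι → σ → ℝ) :
      ∑ s, μ s * ∑ i, g i s (x i s) = ∑ i, ∑ s, μ s * g i s (x i s) := by
    simp_rw [mul_sum]
    exact sum_comm
  have hmin (i : ι) : ∃ y ∈ X i, IsMinOn (fun y : σ → ℝ => ∑ s, μ s * g i s (y s)) (X i) y :=
    (hcmp i).exists_isMinOn (hne i) (by fun_prop)
  choose x hxX hx using hmin
  refine ⟨x, fun i _ => hxX i, fun y hy => ?_, ?_⟩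
  · simp only [mem_ofPred_eq, hsep]
    exact sum_le_sum fun i _ => hx i (hy i trivial)
  · rw [hsep]
    refine sum_congr rfl fun i _ => IsLeast.csInf_eq ⟨⟨x i, hxX i, rfl⟩, ?_⟩
    rintro _ ⟨y, hy, rfl⟩
    exact hx i hy

end

theorem minmax_strong_duality_general (N S : ℕ) (hS : 1 ≤ S)
    (X : Fin N → Set (Fin S → ℝ))
    (hne : ∀ i, (X i).Nonempty) (hcvx : ∀ i, Convex ℝ (X i))
    (hcmp : ∀ i, IsCompact (X i))
    (g : Fin N → Fin S → ℝ → ℝ)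
    (hg : ∀ i s, ConvexOn ℝ Set.univ (g i s)) :
    sInf {v : ℝ | ∃ x : Fin N → (Fin S → ℝ), (∀ i, x i ∈ X i) ∧
        v = ⨆ s, ∑ i, g i s (x i s)}
      = sSup {v : ℝ | ∃ μ : Fin S → ℝ, (∀ s, 0 ≤ μ s) ∧ (∑ s, μ s = 1) ∧
          v = ∑ i, sInf {w : ℝ | ∃ x ∈ X i, w = ∑ s, μ s * g i s (x s)}} := by
  have hgc : ∀ i s, Continuous (g i s) := fun i s => (hg i s).locallyLipschitz.continuous
  have : Nonempty (Fin S) := Fin.pos_iff_nonempty.mp hS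
  have hXcvx : Convex ℝ (univ.pi X) := convex_pi fun i _ => hcvx i
  obtain ⟨a, ha, b, hb, hab⟩ := Sion.exists_isSaddlePointOn
    (f := fun x μ => ∑ s, μ s * ∑ i, g i s (x i s))
    (univ_pi_nonempty_iff.2 hne) hXcvx (isCompact_univ_pi hcmp)
    (fun μ _ => (by fun_prop : Continuous _).lowerSemicontinuous.lowerSemicontinuousOn _)
    (fun μ hμ => ((convexOn_sum_mul_sum hg hμ.1).subset (subset_univ _) hXcvx).quasiconvexOn)
    (convex_stdSimplex ℝ _) ⟨_, single_mem_stdSimplex ℝ (⟨0, hS⟩ : Fin S)⟩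
    (isCompact_stdSimplex ℝ _)
    (fun x _ => (by fun_prop : Continuous _).upperSemicontinuous.upperSemicontinuousOn _)
    (fun x _ => (concaveOn_sum_mul _ (convex_stdSimplex ℝ _)).quasiconcaveOn)
  obtain ⟨xb, hxb, -, hqb⟩ := exists_isMinOn_sum_mul_sum hne hcmp hgc b
  obtain ⟨μa, hμa, hμa_eq⟩ := exists_mem_stdSimplex_sum_mul_eq_ciSup fun s => ∑ i, g i s (a i s)
  refine csInf_eq_csSup_of_le_of_forall_le ⟨a, fun i => ha i trivial, rfl⟩
    ⟨b, hb.1, hb.2, rfl⟩ ?_ ?_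
  · rw [hqb, ← hμa_eq]
    exact hab xb hxb μa hμa
  · rintro _ ⟨x, hx, rfl⟩ _ ⟨μ, hμ0, hμ1, rfl⟩
    obtain ⟨xμ, -, hmin, hq⟩ := exists_isMinOn_sum_mul_sum hne hcmp hgc μ
    rw [hq]
    exact (hmin fun i _ => hx i).trans (sum_mul_le_ciSup_of_mem_stdSimplex ⟨hμ0, hμ1⟩ _)

/-- Strong duality for the min-max problem: the optimal primal (min-max)
value equals the optimal value of the dual over the probability simplex. -/
theorem minmax_strong_duality (N S : ℕ) (hN : 1 ≤ N) (hS : 1 ≤ S)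
    (X : Fin N → Set (Fin S → ℝ))
    (hne : ∀ i, (X i).Nonempty) (hcvx : ∀ i, Convex ℝ (X i))
    (hcmp : ∀ i, IsCompact (X i))
    (g : Fin N → Fin S → ℝ → ℝ)
    (hg : ∀ i s, ConvexOn ℝ Set.univ (g i s)) :
    sInf {v : ℝ | ∃ x : Fin N → (Fin S → ℝ), (∀ i, x i ∈ X i) ∧
        v = ⨆ s, ∑ i, g i s (x i s)}
      = sSup {v : ℝ | ∃ μ : Fin S → ℝ, (∀ s, 0 ≤ μ s) ∧ (∑ s, μ s = 1) ∧
          v = ∑ i, sInf {w : ℝ | ∃ x ∈ X i, w = ∑ s, μ s * g i s (x s)}} :=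
  minmax_strong_duality_general N S hS X hne hcvx hcmp g hg
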